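/- Let $A$ be an associative unital algebra over $\mathbb{Q}$, let $(a_m)_{m \ge 1}$ be a family of pairwise commuting elements of $A$, and define $S_k \in A$ recursively by $S_0 = 1$ and $S_k = \tfrac{1}{k} \sum_{m=1}^{k} a_m S_{k-m}$ for $k \ge 1$. Fix an integer $n \ge 0$ and suppose $\ell \in A$ satisfies the commutation relation $\ell a_m - a_m \ell = m\, a_{n+m}$ for all $m \ge 1$. Then for every $k \ge 0$: $\ell S_k - S_k \ell = \sum_{i=1}^{k} a_{n+i}\, S_{k-i}$. -/
import Mathlib


/-- Let `A` be an associative unital `ℚ`-algebra, `(a m)_{m ≥ 1}` a pairwise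
commuting family in `A`, and `S : ℕ → A` defined recursively by `S 0 = 1` and
`S k = (1/k) ∑_{m=1}^k a m * S (k - m)` for `k ≥ 1`.  If `ℓ ∈ A` satisfies
`ℓ a_m - a_m ℓ = m • a_{n+m}` for all `m ≥ 1` (for a fixed `n ≥ 0`), then for
every `k ≥ 0` we have `ℓ S_k - S_k ℓ = ∑_{i=1}^k a_{n+i} S_{k-i}`. -/
theorem virasoro_schur_commutator {A : Type*} [Ring A] [Algebra ℚ A]
    (a : ℕ → A)
    (hcomm : ∀ m m', 1 ≤ m → 1 ≤ m' → Commute (a m) (a m'))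
    (S : ℕ → A)
    (hS0 : S 0 = 1)
    (hSrec : ∀ k, 1 ≤ k → S k = (k : ℚ)⁻¹ • ∑ m ∈ Finset.Icc 1 k, a m * S (k - m))
    (n : ℕ) (ℓ : A)
    (hℓ : ∀ m, 1 ≤ m → ℓ * a m - a m * ℓ = (m : ℚ) • a (n + m)) :
    ∀ k, ℓ * S k - S k * ℓ = ∑ i ∈ Finset.Icc 1 k, a (n + i) * S (k - i) := by
  have hSmul : ∀ k : ℕ, (k : ℚ) • S k = ∑ m ∈ Finset.Icc 1 k, a m * S (k - m) := by
    intro k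
    rcases Nat.eq_zero_or_pos k with rfl | hk
    · simp
    · have hkQ : (k : ℚ) ≠ 0 := by exact_mod_cast hk.ne'
      rw [hSrec k hk, smul_smul, mul_inv_cancel₀ hkQ, one_smul]
  intro k
  induction k using Nat.strong_induction_on with
  | _ k ih =>
  rcases Nat.eq_zero_or_pos k with rfl | hk
  · simp [hS0]
  · have hkQ : (k : ℚ) ≠ 0 := by exact_mod_cast hk.ne'
    apply smul_right_injective A hkQ
    show (k : ℚ) • (ℓ * S k - S k * ℓ) = (k : ℚ) • ∑ i ∈ Finset.Icc 1 k, a (n + i) * S (k - i)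
    rw [smul_sub, ← mul_smul_comm, ← smul_mul_assoc, hSmul k, Finset.mul_sum, Finset.sum_mul,
      ← Finset.sum_sub_distrib, Finset.smul_sum]
    have key : ∀ m ∈ Finset.Icc 1 k,
        ℓ * (a m * S (k - m)) - a m * S (k - m) * ℓ
          = (m : ℚ) • (a (n + m) * S (k - m))
            + ∑ i ∈ Finset.Icc 1 (k - m), a m * (a (n + i) * S (k - m - i)) := by
      intro m hm
      simp only [Finset.mem_Icc] at hm
      have h1 : ℓ * (a m * S (k - m)) - a m * S (k - m) * ℓ
          = (ℓ * a m - a m * ℓ) * S (k - m) + a m * (ℓ * S (k - m) - S (k - m) * ℓ) := by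
        noncomm_ring
      rw [h1, hℓ m hm.1, ih (k - m) (by omega), smul_mul_assoc, Finset.mul_sum]
    rw [Finset.sum_congr rfl key, Finset.sum_add_distrib]
    have key2 : ∀ i ∈ Finset.Icc 1 k,
        (k : ℚ) • (a (n + i) * S (k - i))
          = (i : ℚ) • (a (n + i) * S (k - i))
            + ∑ m ∈ Finset.Icc 1 (k - i), a (n + i) * (a m * S (k - i - m)) := by
      intro i hi
      simp only [Finset.mem_Icc] at hi
      have hcast : (k : ℚ) = (i : ℚ) + ((k - i : ℕ) : ℚ) := by
        rw [Nat.cast_sub hi.2]; ring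
      rw [hcast, add_smul]
      congr 1
      rw [← mul_smul_comm, hSmul (k - i), Finset.mul_sum]
    rw [Finset.sum_congr rfl key2, Finset.sum_add_distrib]
    congr 1
    rw [Finset.sum_comm' (t' := Finset.Icc 1 k) (s' := fun i => Finset.Icc 1 (k - i))
        (by intro m i; simp only [Finset.mem_Icc]; omega)]
    refine Finset.sum_congr rfl fun i hi => Finset.sum_congr rfl fun m hm => ?_
    simp only [Finset.mem_Icc] at hi hm
    have hc := (hcomm m (n + i) hm.1 (by omega)).eq
    rw [← mul_assoc, hc, mul_assoc, show k - m - i = k - i - m from by omega]
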